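/- arXiv:2512.18588 — 2 statements merged into one kernel-verified Lean document; each statement's English description precedes it below -/
import Mathlib

section
/- For any finite index set T, any integrable random process (X_t)_{t∈T}, and any family of real numbers (m_t)_{t∈T}, the expected supremum E[sup_{t∈T} {X_t + m_t}] equals the supremum over all probability measures μ on T of F(X,μ) + ∫ m_t μ(dt), where F(X,μ) = sup over all couplings of X and a T-valued random variable Z with law μ of E[X_Z]. -/
open MeasureTheory ProbabilityTheory Real Filter

/-! For every coupling `(x, Z)` we have `x Z + m Z ≤ ⨆ t, (x t + m t)` pointwise, so
`𝓕(X, μ) + ∫ m dμ` never exceeds `E[⨆ t, (X t + m t)]`. Conversely, a measurable choice of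
`Z` as an argmax of `t ↦ X t + m t` turns the pointwise inequality into an equality, and the
law of this `Z` attains the supremum. -/

/-- Fernique's functional: the supremum of `E[X_Z]` over all couplings of
`P` (a law on `T → ℝ`) and `μ` (a law on `T`). -/
noncomputable def fernique {T : Type*} [Fintype T] [MeasurableSpace T]
    (P : Measure (T → ℝ)) (μ : Measure T) : ℝ :=
  sSup { r | ∃ ρ : Measure ((T → ℝ) × T), IsProbabilityMeasure ρ ∧
      ρ.map Prod.fst = P ∧ ρ.map Prod.snd = μ ∧ r = ∫ p, p.1 p.2 ∂ρ }

theorem exists_measurable_argmax {α T : Type*} [MeasurableSpace α] [Finite T] [Nonempty T]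
    [MeasurableSpace T] {f : T → α → ℝ} (hf : ∀ t, Measurable (f t)) :
    ∃ W : α → T, Measurable W ∧ ∀ x s, f s x ≤ f (W x) x := by
  classical
  obtain ⟨g, hg⟩ := exists_surjective_nat T
  have hmax : ∀ x, ∃ n, ∀ s, f s x ≤ f (g n) x := fun x => by
    obtain ⟨t, ht⟩ := Finite.exists_max fun t => f t x
    obtain ⟨n, rfl⟩ := hg t
    exact ⟨n, ht⟩
  refine ⟨fun x => g (Nat.find (hmax x)), ?_, fun x => Nat.find_spec (hmax x)⟩
  refine measurable_from_nat.comp (measurable_find hmax fun n => ?_)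
  simp only [Set.ofPred_forall]
  exact .iInter fun s => measurableSet_le (hf s) (hf (g n))

theorem integrable_iSup {α ι : Type*} [MeasurableSpace α] {μ : Measure α} [Fintype ι]
    [Nonempty ι] {f : ι → α → ℝ} (hf : ∀ i, Integrable (f i) μ) :
    Integrable (fun x => ⨆ i, f i x) μ := by
  have hsup : (fun x => ⨆ i, f i x) = Finset.univ.sup' Finset.univ_nonempty f := by
    ext x
    rw [Finset.sup'_apply, Finset.sup'_univ_eq_ciSup]
  rw [hsup]
  exact Finset.sup'_induction (p := (Integrable · μ)) _ _
    (fun _ hg _ hh => Integrable.sup hg hh) fun i _ => hf i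

section Coupling

variable {T : Type*} [Fintype T] [MeasurableSpace T] [MeasurableSingletonClass T]

theorem measurable_eval_prod : Measurable fun p : (T → ℝ) × T => p.1 p.2 :=
  measurable_from_prod_countable_left fun t => measurable_pi_apply t

theorem integrable_eval_of_integrable_map_fst {ρ : Measure ((T → ℝ) × T)}
    (hP : ∀ t, Integrable (fun x => x t) (ρ.map Prod.fst)) :
    Integrable (fun p : (T → ℝ) × T => p.1 p.2) ρ := by
  have hsum : Integrable (fun x : T → ℝ => ∑ t, |x t|) (ρ.map Prod.fst) :=
    integrable_finsetSum _ fun t _ => (hP t).abs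
  refine (hsum.comp_measurable measurable_fst).mono' measurable_eval_prod.aestronglyMeasurable
    (ae_of_all _ fun p => ?_)
  exact Finset.single_le_sum (f := fun t => |p.1 t|) (fun t _ => abs_nonneg _)
    (Finset.mem_univ p.2)

theorem integral_eval_add_integral_le_integral_iSup [Nonempty T] {ρ : Measure ((T → ℝ) × T)}
    [IsFiniteMeasure ρ] (hP : ∀ t, Integrable (fun x => x t) (ρ.map Prod.fst)) (m : T → ℝ) :
    ∫ p, p.1 p.2 ∂ρ + ∫ t, m t ∂(ρ.map Prod.snd) ≤
      ∫ x, ⨆ t, (x t + m t) ∂(ρ.map Prod.fst) := by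
  have hX := integrable_eval_of_integrable_map_fst hP
  have hm : Integrable (fun p : (T → ℝ) × T => m p.2) ρ :=
    (Integrable.of_finite (μ := ρ.map Prod.snd)).comp_measurable measurable_snd
  have hG : Integrable (fun x : T → ℝ => ⨆ t, (x t + m t)) (ρ.map Prod.fst) :=
    integrable_iSup fun t => (hP t).add (integrable_const (m t))
  rw [integral_map measurable_snd.aemeasurable (measurable_of_finite m).aestronglyMeasurable,
    integral_map measurable_fst.aemeasurable hG.aestronglyMeasurable, ← integral_add hX hm]
  exact integral_mono (hX.add hm) (hG.comp_measurable measurable_fst)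
    fun p => le_ciSup (f := fun t => p.1 t + m t) (Finite.bddAbove_range _) p.2

theorem integral_eval_le_fernique [Nonempty T] {ρ : Measure ((T → ℝ) × T)}
    [IsProbabilityMeasure ρ] (hP : ∀ t, Integrable (fun x => x t) (ρ.map Prod.fst)) :
    ∫ p, p.1 p.2 ∂ρ ≤ fernique (ρ.map Prod.fst) (ρ.map Prod.snd) := by
  refine le_csSup ⟨∫ x, ⨆ t, (x t + 0) ∂(ρ.map Prod.fst), ?_⟩ ⟨ρ, inferInstance, rfl, rfl, rfl⟩
  rintro _ ⟨ρ', hρ', hfst, -, rfl⟩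
  have hle := integral_eval_add_integral_le_integral_iSup (ρ := ρ') (hfst ▸ hP) 0
  rw [hfst] at hle
  simpa using hle

theorem fernique_add_integral_le [Nonempty T] {P : Measure (T → ℝ)} [IsProbabilityMeasure P]
    (hP : ∀ t, Integrable (fun x => x t) P) (μ : Measure T) [IsProbabilityMeasure μ]
    (m : T → ℝ) : fernique P μ + ∫ t, m t ∂μ ≤ ∫ x, ⨆ t, (x t + m t) ∂P := by
  rw [← le_sub_iff_add_le]
  refine csSup_le ⟨_, P.prod μ, inferInstance, by simp, by simp, rfl⟩ ?_
  rintro _ ⟨ρ, hρ, rfl, rfl, rfl⟩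
  have hle := integral_eval_add_integral_le_integral_iSup hP m
  linarith

theorem exists_coupling_integral_eq_integral_iSup [Nonempty T] {P : Measure (T → ℝ)}
    [IsProbabilityMeasure P] (hP : ∀ t, Integrable (fun x => x t) P) (m : T → ℝ) :
    ∃ ρ : Measure ((T → ℝ) × T), IsProbabilityMeasure ρ ∧ ρ.map Prod.fst = P ∧
      ∫ x, ⨆ t, (x t + m t) ∂P = ∫ p, p.1 p.2 ∂ρ + ∫ t, m t ∂(ρ.map Prod.snd) := by
  obtain ⟨W, hW, hmax⟩ := exists_measurable_argmax (f := fun t (x : T → ℝ) => x t + m t)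
    fun t => (measurable_pi_apply t).add_const _
  have hpair : Measurable fun x => (x, W x) := measurable_id.prodMk hW
  set ρ := P.map fun x => (x, W x)
  have hfst : ρ.map Prod.fst = P := by
    rw [Measure.map_map measurable_fst hpair]
    exact Measure.map_id
  have hX := integrable_eval_of_integrable_map_fst (hfst ▸ hP)
  have hm : Integrable (fun p : (T → ℝ) × T => m p.2) ρ :=
    (Integrable.of_finite (μ := ρ.map Prod.snd)).comp_measurable measurable_snd
  refine ⟨ρ, Measure.isProbabilityMeasure_map hpair.aemeasurable, hfst, ?_⟩
  calc ∫ x, ⨆ t, (x t + m t) ∂P = ∫ x, (x (W x) + m (W x)) ∂P :=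
        integral_congr_ae <| ae_of_all _ fun x => le_antisymm (ciSup_le (hmax x))
          (le_ciSup (f := fun t => x t + m t) (Finite.bddAbove_range _) (W x))
    _ = ∫ p, (p.1 p.2 + m p.2) ∂ρ :=
        (integral_map hpair.aemeasurable (hX.add hm).aestronglyMeasurable).symm
    _ = ∫ p, p.1 p.2 ∂ρ + ∫ t, m t ∂(ρ.map Prod.snd) := by
        rw [integral_add hX hm,
          integral_map measurable_snd.aemeasurable (measurable_of_finite m).aestronglyMeasurable]

theorem isGreatest_fernique_add_integral [Nonempty T] {P : Measure (T → ℝ)}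
    [IsProbabilityMeasure P] (hP : ∀ t, Integrable (fun x => x t) P) (m : T → ℝ) :
    IsGreatest {r | ∃ μ : Measure T, IsProbabilityMeasure μ ∧ r = fernique P μ + ∫ t, m t ∂μ}
      (∫ x, ⨆ t, (x t + m t) ∂P) := by
  refine ⟨?_, fun _ ⟨μ, hμ, hr⟩ => hr ▸ fernique_add_integral_le hP μ m⟩
  obtain ⟨ρ, hρ, rfl, hopt⟩ := exists_coupling_integral_eq_integral_iSup hP m
  have hμ := Measure.isProbabilityMeasure_map (μ := ρ) measurable_snd.aemeasurable
  refine ⟨ρ.map Prod.snd, hμ, le_antisymm ?_ (fernique_add_integral_le hP _ m)⟩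
  rw [hopt]
  gcongr
  exact integral_eval_le_fernique hP

end Coupling

/-- The expected supremum of a shifted process equals the supremum over
probability measures `μ` of `𝓕(X,μ) + ∫ m dμ`. -/
theorem stmt0 {T : Type*} [Fintype T] [Nonempty T] [MeasurableSpace T]
    [MeasurableSingletonClass T]
    {Ω : Type*} [MeasureSpace Ω] [IsProbabilityMeasure (ℙ : Measure Ω)]
    (X : Ω → T → ℝ) (hXm : Measurable X)
    (hXint : ∀ t, Integrable (fun ω => X ω t) ℙ) (m : T → ℝ) :
    ∫ ω, ⨆ t, (X ω t + m t) ∂ℙ =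
      sSup { r | ∃ μ : Measure T, IsProbabilityMeasure μ ∧
        r = fernique (Measure.map X ℙ) μ + ∫ t, m t ∂μ } := by
  have hP : ∀ t, Integrable (fun x : T → ℝ => x t) (Measure.map X ℙ) := fun t =>
    (integrable_map_measure (measurable_pi_apply t).aestronglyMeasurable hXm.aemeasurable).2
      (hXint t)
  have := Measure.isProbabilityMeasure_map (μ := (ℙ : Measure Ω)) hXm.aemeasurable
  have hG : Integrable (fun x : T → ℝ => ⨆ t, (x t + m t)) (Measure.map X ℙ) :=
    integrable_iSup fun t => (hP t).add (integrable_const (m t))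
  rw [(isGreatest_fernique_add_integral hP m).csSup_eq,
    integral_map hXm.aemeasurable hG.aestronglyMeasurable]
end

section
/- For a finite set T, integrable random process X on T, and probability measures μ, μ' on T, and any coupling (Z,Z') of μ and μ', one has F(X,μ) − F(X,μ') ≤ 2 sup over couplings of X with (Z,Z') of E[1_{Z≠Z'} ‖X‖], where ‖X‖ = max_{t∈T}|X_t|. -/
/-!
Take a coupling `(X, Z)` of the law of `X` with `μ`. Disintegrating `ν` along its first coordinate
and feeding `Z` into the conditional kernel produces `Z'` with `(Z, Z') ∼ ν`, jointly with `X`.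
Pointwise `X_Z - X_{Z'} ≤ 2 · 1_{Z ≠ Z'} ‖X‖`, and `(X, Z')` is a coupling with `μ'`, so
`E[X_Z] ≤ F(X, μ') + 2 E[1_{Z ≠ Z'} ‖X‖]`; now take the supremum over `(X, Z)`.
-/

open MeasureTheory ProbabilityTheory Real Filter

lemma map_prodMap_compProd_comap {α β γ : Type*} [MeasurableSpace α] [MeasurableSpace β]
    [MeasurableSpace γ] (μ : Measure α) [SFinite μ] (κ : Kernel β γ) [IsSFiniteKernel κ]
    {f : α → β} (hf : Measurable f) :
    (μ ⊗ₘ κ.comap f hf).map (Prod.map f id) = μ.map f ⊗ₘ κ := by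
  ext s hs
  rw [Measure.map_apply (hf.prodMap measurable_id) hs,
    Measure.compProd_apply (hf.prodMap measurable_id hs), Measure.compProd_apply hs,
    lintegral_map (Kernel.measurable_kernel_prodMk_left hs) hf]
  rfl

lemma exists_glue_coupling {E S S' : Type*} [MeasurableSpace E] [MeasurableSpace S]
    [MeasurableSpace S'] [StandardBorelSpace S'] [Nonempty S']
    (ρ₁ : Measure (E × S)) [IsProbabilityMeasure ρ₁]
    (ν : Measure (S × S')) [IsFiniteMeasure ν] (h : ν.map Prod.fst = ρ₁.map Prod.snd) :
    ∃ ρ : Measure (E × (S × S')), IsProbabilityMeasure ρ ∧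
      ρ.map (fun p => (p.1, p.2.1)) = ρ₁ ∧ ρ.map Prod.snd = ν := by
  let ρ₂ := ρ₁ ⊗ₘ ν.condKernel.comap Prod.snd measurable_snd
  have hassoc : Measurable (fun p : (E × S) × S' => (p.1.1, (p.1.2, p.2))) := by fun_prop
  refine ⟨ρ₂.map (fun p => (p.1.1, (p.1.2, p.2))),
    Measure.isProbabilityMeasure_map hassoc.aemeasurable, ?_, ?_⟩
  · rw [Measure.map_map (by fun_prop) hassoc]
    exact Measure.fst_compProd _ _
  · rw [Measure.map_map measurable_snd hassoc]
    change ρ₂.map (Prod.map Prod.snd id) = ν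
    rw [map_prodMap_compProd_comap, ← h]
    exact ν.disintegrate _

/-- `fernique P μ` is `sSup (couplingIntegrals P μ fun p => p.1 p.2)`, and the supremum on the
right-hand side of `stmt17` is also of this form. -/
def couplingIntegrals {E α : Type*} [MeasurableSpace E] [MeasurableSpace α]
    (P : Measure E) (μ : Measure α) (g : E × α → ℝ) : Set ℝ :=
  {r | ∃ ρ : Measure (E × α), IsProbabilityMeasure ρ ∧
    ρ.map Prod.fst = P ∧ ρ.map Prod.snd = μ ∧ r = ∫ p, g p ∂ρ}

section Coupling

variable {E α : Type*} [MeasurableSpace E] [MeasurableSpace α]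

lemma couplingIntegrals_nonempty (P : Measure E) (μ : Measure α) [IsProbabilityMeasure P]
    [IsProbabilityMeasure μ] (g : E × α → ℝ) : (couplingIntegrals P μ g).Nonempty :=
  ⟨_, P.prod μ, inferInstance, Measure.fst_prod, Measure.snd_prod, rfl⟩

variable [NormedAddCommGroup E] [OpensMeasurableSpace E] {P : Measure E}

lemma integrable_of_norm_le_norm_fst (hP : Integrable (‖·‖) P) {ρ : Measure (E × α)}
    (hρ : ρ.map Prod.fst = P) {g : E × α → ℝ} (hg : AEStronglyMeasurable g ρ)
    (hle : ∀ p, ‖g p‖ ≤ ‖p.1‖) : Integrable g ρ := by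
  rw [← hρ, integrable_map_measure (by fun_prop) (by fun_prop)] at hP
  exact hP.mono' hg (.of_forall hle)

lemma integral_le_integral_norm_of_map_fst (hP : Integrable (‖·‖) P) {ρ : Measure (E × α)}
    (hρ : ρ.map Prod.fst = P) {g : E × α → ℝ} (hg : AEStronglyMeasurable g ρ)
    (hle : ∀ p, ‖g p‖ ≤ ‖p.1‖) : ∫ p, g p ∂ρ ≤ ∫ x, ‖x‖ ∂P := by
  have hnorm : Integrable (fun p : E × α => ‖p.1‖) ρ :=
    integrable_of_norm_le_norm_fst hP hρ measurable_fst.norm.aestronglyMeasurable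
      fun p => (norm_norm p.1).le
  calc ∫ p, g p ∂ρ ≤ ∫ p, ‖p.1‖ ∂ρ :=
        integral_mono (integrable_of_norm_le_norm_fst hP hρ hg hle) hnorm
          fun p => (le_abs_self _).trans (hle p)
    _ = ∫ x, ‖x‖ ∂P := by rw [← hρ, integral_map (by fun_prop) (by fun_prop)]

lemma bddAbove_couplingIntegrals (hP : Integrable (‖·‖) P) (μ : Measure α)
    {g : E × α → ℝ} (hg : Measurable g) (hle : ∀ p, ‖g p‖ ≤ ‖p.1‖) :
    BddAbove (couplingIntegrals P μ g) := by
  refine ⟨∫ x, ‖x‖ ∂P, ?_⟩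
  rintro _ ⟨ρ, -, hρ, -, rfl⟩
  exact integral_le_integral_norm_of_map_fst hP hρ hg.aestronglyMeasurable hle

end Coupling

section Fernique

variable {T : Type*} [Fintype T]

lemma sub_le_two_mul_indicator_ne (x : T → ℝ) (q : T × T) :
    x q.1 - x q.2 ≤ 2 * {q : T × T | q.1 ≠ q.2}.indicator (fun _ => ‖x‖) q := by
  by_cases hq : q.1 = q.2
  · simp [hq]
  · rw [Set.indicator_of_mem hq]
    have h₁ : |x q.1| ≤ ‖x‖ := norm_le_pi_norm x q.1
    have h₂ : |x q.2| ≤ ‖x‖ := norm_le_pi_norm x q.2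
    linarith [le_abs_self (x q.1), neg_abs_le (x q.2)]

lemma norm_indicator_ne_le (x : T → ℝ) (q : T × T) :
    ‖{q : T × T | q.1 ≠ q.2}.indicator (fun _ => ‖x‖) q‖ ≤ ‖x‖ :=
  (norm_indicator_le_norm_self _ _).trans_eq (norm_norm x)

variable [MeasurableSpace T] [MeasurableSingletonClass T]

lemma measurable_eval_apply : Measurable (fun p : (T → ℝ) × T => p.1 p.2) :=
  measurable_from_prod_countable_left fun t => measurable_pi_apply t

lemma measurable_indicator_ne_norm : Measurable (fun p : (T → ℝ) × (T × T) =>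
    {q : T × T | q.1 ≠ q.2}.indicator (fun _ => ‖p.1‖) p.2) :=
  measurable_from_prod_countable_left fun q => by
    by_cases hq : q.1 = q.2 <;> simp [hq, measurable_norm]

lemma integral_apply_fst_le_add_two_mul {P : Measure (T → ℝ)} (hP : Integrable (‖·‖) P)
    {ρ : Measure ((T → ℝ) × (T × T))} (hρ : ρ.map Prod.fst = P) :
    ∫ p, p.1 p.2.1 ∂ρ ≤ ∫ p, p.1 p.2.2 ∂ρ +
      2 * ∫ p, {q : T × T | q.1 ≠ q.2}.indicator (fun _ => ‖p.1‖) p.2 ∂ρ := by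
  have hint₁ : Integrable (fun p : (T → ℝ) × (T × T) => p.1 p.2.1) ρ :=
    integrable_of_norm_le_norm_fst hP hρ
      (measurable_eval_apply.comp (measurable_fst.prodMk measurable_snd.fst)).aestronglyMeasurable
      fun p => norm_le_pi_norm p.1 p.2.1
  have hint₂ : Integrable (fun p : (T → ℝ) × (T × T) => p.1 p.2.2) ρ :=
    integrable_of_norm_le_norm_fst hP hρ
      (measurable_eval_apply.comp (measurable_fst.prodMk measurable_snd.snd)).aestronglyMeasurable
      fun p => norm_le_pi_norm p.1 p.2.2
  have hint₃ := integrable_of_norm_le_norm_fst hP hρ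
    measurable_indicator_ne_norm.aestronglyMeasurable fun p => norm_indicator_ne_le p.1 p.2
  rw [← sub_le_iff_le_add', ← integral_sub hint₁ hint₂, ← integral_const_mul]
  exact integral_mono (hint₁.sub hint₂) (hint₃.const_mul 2)
    fun p => sub_le_two_mul_indicator_ne p.1 p.2

lemma exists_couplingIntegrals_le [Nonempty T] {P : Measure (T → ℝ)}
    (hP : Integrable (‖·‖) P) {μ μ' : Measure T} (ν : Measure (T × T)) [IsFiniteMeasure ν]
    (hν₁ : ν.map Prod.fst = μ) (hν₂ : ν.map Prod.snd = μ') {r : ℝ}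
    (hr : r ∈ couplingIntegrals P μ fun p => p.1 p.2) :
    ∃ r' ∈ couplingIntegrals P μ' (fun p => p.1 p.2), ∃ s ∈ couplingIntegrals P ν
      (fun p => {q : T × T | q.1 ≠ q.2}.indicator (fun _ => ‖p.1‖) p.2), r ≤ r' + 2 * s := by
  obtain ⟨ρ₁, hρ₁, hρ₁P, hρ₁μ, rfl⟩ := hr
  obtain ⟨ρ, hρ, hρρ₁, hρν⟩ := exists_glue_coupling ρ₁ ν (hν₁.trans hρ₁μ.symm)
  have hπ₁ : Measurable (fun p : (T → ℝ) × (T × T) => (p.1, p.2.1)) := by fun_prop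
  have hπ₂ : Measurable (fun p : (T → ℝ) × (T × T) => (p.1, p.2.2)) := by fun_prop
  have hρP : ρ.map Prod.fst = P := by
    rw [← hρ₁P, ← hρρ₁, Measure.map_map measurable_fst hπ₁]
    rfl
  refine ⟨_, ⟨ρ.map fun p => (p.1, p.2.2), Measure.isProbabilityMeasure_map hπ₂.aemeasurable,
    ?_, ?_, rfl⟩, _, ⟨ρ, hρ, hρP, hρν, rfl⟩, ?_⟩
  · rw [Measure.map_map measurable_fst hπ₂]
    exact hρP
  · rw [Measure.map_map measurable_snd hπ₂, ← hν₂, ← hρν,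
      Measure.map_map measurable_snd measurable_snd]
    rfl
  · rw [← hρρ₁, integral_map hπ₁.aemeasurable measurable_eval_apply.aestronglyMeasurable,
      integral_map hπ₂.aemeasurable measurable_eval_apply.aestronglyMeasurable]
    exact integral_apply_fst_le_add_two_mul hP hρP

end Fernique

theorem stmt17_general {T : Type*} [Fintype T] [Nonempty T] [MeasurableSpace T]
    [MeasurableSingletonClass T]
    {Ω : Type*} [MeasureSpace Ω] [IsProbabilityMeasure (ℙ : Measure Ω)]
    (X : Ω → T → ℝ) (hXm : Measurable X) (hXint : Integrable (fun ω => ‖X ω‖) ℙ)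
    (μ μ' : Measure T) [IsProbabilityMeasure μ]
    (ν : Measure (T × T)) [IsProbabilityMeasure ν]
    (hν₁ : ν.map Prod.fst = μ) (hν₂ : ν.map Prod.snd = μ') :
    fernique (Measure.map X ℙ) μ - fernique (Measure.map X ℙ) μ' ≤
      2 * sSup { r | ∃ ρ : Measure ((T → ℝ) × (T × T)),
        IsProbabilityMeasure ρ ∧
        ρ.map Prod.fst = Measure.map X ℙ ∧ ρ.map Prod.snd = ν ∧
        r = ∫ p, Set.indicator {q : T × T | q.1 ≠ q.2} (fun _ => ‖p.1‖) p.2 ∂ρ } := by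
  set P := Measure.map X ℙ
  have : IsProbabilityMeasure P := Measure.isProbabilityMeasure_map hXm.aemeasurable
  have hP : Integrable (‖·‖) P :=
    (integrable_map_measure measurable_norm.aestronglyMeasurable hXm.aemeasurable).mpr hXint
  have hbdd' := bddAbove_couplingIntegrals hP μ' measurable_eval_apply
    fun p => norm_le_pi_norm p.1 p.2
  have hbddν := bddAbove_couplingIntegrals hP ν measurable_indicator_ne_norm
    fun p => norm_indicator_ne_le p.1 p.2
  refine sub_le_iff_le_add'.mpr (csSup_le (couplingIntegrals_nonempty P μ _) fun r hr => ?_)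
  obtain ⟨r', hr', s, hs, hle⟩ := exists_couplingIntegrals_le hP ν hν₁ hν₂ hr
  exact hle.trans (add_le_add (le_csSup hbdd' hr') (by gcongr; exact le_csSup hbddν hs))

/-- For any coupling `ν` of `μ` and `μ'`, the difference of Fernique's
functionals is bounded by twice the supremum over couplings of the law of `X`
with `ν` of `E[1_{Z ≠ Z'} ‖X‖]`. -/
theorem stmt17 {T : Type*} [Fintype T] [Nonempty T] [MeasurableSpace T]
    [MeasurableSingletonClass T]
    {Ω : Type*} [MeasureSpace Ω] [IsProbabilityMeasure (ℙ : Measure Ω)]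
    (X : Ω → T → ℝ) (hXm : Measurable X) (hXint : Integrable (fun ω => ‖X ω‖) ℙ)
    (μ μ' : Measure T) [IsProbabilityMeasure μ] [IsProbabilityMeasure μ']
    (ν : Measure (T × T)) [IsProbabilityMeasure ν]
    (hν₁ : ν.map Prod.fst = μ) (hν₂ : ν.map Prod.snd = μ') :
    fernique (Measure.map X ℙ) μ - fernique (Measure.map X ℙ) μ' ≤
      2 * sSup { r | ∃ ρ : Measure ((T → ℝ) × (T × T)),
        IsProbabilityMeasure ρ ∧
        ρ.map Prod.fst = Measure.map X ℙ ∧ ρ.map Prod.snd = ν ∧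
        r = ∫ p, Set.indicator {q : T × T | q.1 ≠ q.2} (fun _ => ‖p.1‖) p.2 ∂ρ } :=
  stmt17_general X hXm hXint μ μ' ν hν₁ hν₂
end
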